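/- For every dimension d ≥ 1 and every finite simple graph G = (V,E), there exists a unique minimal totally loose supergraph of G in ℝ^d on the vertex set V; that is, there is a totally loose graph tlc_d(G) on V containing G as a subgraph such that tlc_d(G) is a subgraph of every totally loose graph on V that contains G. -/
import Mathlib


open scoped Classical

noncomputable section

namespace RigidAug

variable {V : Type*}

/-- Two frameworks are equivalent if corresponding edge lengths agree. -/
def FrameworkEquiv (d : ℕ) (G : SimpleGraph V) (p q : V → EuclideanSpace ℝ (Fin d)) : Prop :=
  ∀ ⦃u v : V⦄, G.Adj u v → dist (p u) (p v) = dist (q u) (q v)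

/-- Two maps are congruent if all pairwise distances agree. -/
def Congruent (d : ℕ) (p q : V → EuclideanSpace ℝ (Fin d)) : Prop :=
  ∀ u v : V, dist (p u) (p v) = dist (q u) (q v)

/-- A framework is generic if the coordinates are algebraically independent over ℚ. -/
def Generic (d : ℕ) (p : V → EuclideanSpace ℝ (Fin d)) : Prop :=
  AlgebraicIndependent ℚ (fun x : V × Fin d => p x.1 x.2)

/-- A framework is globally rigid if every equivalent framework is congruent to it. -/
def GloballyRigidFramework (d : ℕ) (G : SimpleGraph V) (p : V → EuclideanSpace ℝ (Fin d)) : Prop :=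
  ∀ q : V → EuclideanSpace ℝ (Fin d), FrameworkEquiv d G p q → Congruent d p q

/-- A graph is globally rigid in ℝ^d if every generic framework is globally rigid. -/
def GloballyRigid (d : ℕ) (G : SimpleGraph V) : Prop :=
  ∀ p : V → EuclideanSpace ℝ (Fin d), Generic d p → GloballyRigidFramework d G p

/-- A framework is rigid if all equivalent nearby frameworks are congruent to it. -/
def RigidFramework (d : ℕ) (G : SimpleGraph V) (p : V → EuclideanSpace ℝ (Fin d)) : Prop :=
  ∃ ε : ℝ, 0 < ε ∧ ∀ q : V → EuclideanSpace ℝ (Fin d),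
    FrameworkEquiv d G p q → (∀ v : V, dist (p v) (q v) < ε) → Congruent d p q

/-- A graph is rigid in ℝ^d if every generic framework is rigid. -/
def Rigid (d : ℕ) (G : SimpleGraph V) : Prop :=
  ∀ p : V → EuclideanSpace ℝ (Fin d), Generic d p → RigidFramework d G p

/-- A pair is globally linked in a framework if every equivalent framework preserves
its distance. -/
def GloballyLinkedFramework (d : ℕ) (G : SimpleGraph V) (p : V → EuclideanSpace ℝ (Fin d))
    (u v : V) : Prop :=
  ∀ q : V → EuclideanSpace ℝ (Fin d), FrameworkEquiv d G p q →
    dist (p u) (p v) = dist (q u) (q v)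

/-- A pair is weakly globally linked in G in ℝ^d if it is globally linked in some
generic framework. -/
def WeaklyGloballyLinked (d : ℕ) (G : SimpleGraph V) (u v : V) : Prop :=
  ∃ p : V → EuclideanSpace ℝ (Fin d), Generic d p ∧ GloballyLinkedFramework d G p u v

/-- A pair is globally loose if it is not weakly globally linked. -/
def GloballyLoose (d : ℕ) (G : SimpleGraph V) (u v : V) : Prop :=
  ¬ WeaklyGloballyLinked d G u v

/-- A graph is totally loose if every non-adjacent pair of vertices is globally loose. -/
def TotallyLoose (d : ℕ) (G : SimpleGraph V) : Prop :=
  ∀ u v : V, u ≠ v → ¬ G.Adj u v → GloballyLoose d G u v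

/-- The graph obtained by adding the edge uv. -/
def addEdge (G : SimpleGraph V) (u v : V) : SimpleGraph V :=
  G ⊔ SimpleGraph.fromEdgeSet {s(u, v)}

/-- A graph is k-connected if it has at least k+1 vertices and deleting any set of fewer
than k vertices leaves it connected. -/
def KConnected (k : ℕ) (G : SimpleGraph V) : Prop :=
  k + 1 ≤ Nat.card V ∧
    ∀ S : Set V, S.Finite → S.ncard < k → (G.induce Sᶜ).Connected

/-- A graph is saturated non-globally rigid in ℝ^d if it is not globally rigid but adding
any new edge makes it globally rigid. -/
def SNGR (d : ℕ) (G : SimpleGraph V) : Prop :=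
  ¬ GloballyRigid d G ∧ ∀ u v : V, u ≠ v → ¬ G.Adj u v → GloballyRigid d (addEdge G u v)

/-- A graph is d-special if it is rigid in ℝ^d and every rigid proper induced subgraph of
it is complete. -/
def IsSpecial (d : ℕ) (G : SimpleGraph V) : Prop :=
  Rigid d G ∧ ∀ X : Set V, X ≠ Set.univ → Rigid d (G.induce X) → G.IsClique X

/-- A vertex set is standard if it induces a rigid subgraph in ℝ² and every outside
vertex has at most two neighbours in it. -/
def IsStandard (G : SimpleGraph V) (X : Set V) : Prop :=
  Rigid 2 (G.induce X) ∧ ∀ w : V, w ∉ X → ({u ∈ X | G.Adj w u} : Set V).ncard ≤ 2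

/-- The graph obtained by adding all edges between distinct vertices of Z. -/
def addClique (G : SimpleGraph V) (Z : Set V) : SimpleGraph V :=
  G ⊔ SimpleGraph.fromRel (fun u v => u ∈ Z ∧ v ∈ Z)

end RigidAug

namespace RigidAug

/-- Weak global linking is monotone in the graph. -/
lemma wgl_mono {V : Type*} {d : ℕ} {G G' : SimpleGraph V} (h : G ≤ G') {u v : V}
    (hw : WeaklyGloballyLinked d G u v) : WeaklyGloballyLinked d G' u v := by
  obtain ⟨p, hp, hl⟩ := hw
  exact ⟨p, hp, fun q hq => hl q (fun a b hab => hq (h hab))⟩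

/-- For every d ≥ 1 and every finite simple graph G, there is a unique
minimal totally loose supergraph of G in ℝ^d on the same vertex set. -/
theorem unique_minimal_totallyLoose_supergraph {V : Type*} [Fintype V] {d : ℕ} (hd : 1 ≤ d)
    (G : SimpleGraph V) :
    ∃! H : SimpleGraph V, G ≤ H ∧ TotallyLoose d H ∧
      ∀ K : SimpleGraph V, G ≤ K → TotallyLoose d K → H ≤ K := by
  classical
  set f : SimpleGraph V →o SimpleGraph V :=
    ⟨fun X => G ⊔ (X ⊔ SimpleGraph.fromRel (WeaklyGloballyLinked d X)),
     by
      intro X Y h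
      refine sup_le_sup_left (sup_le_sup h ?_) G
      intro u v huv
      rcases huv with ⟨hne, hor⟩
      exact ⟨hne, hor.imp (wgl_mono h) (wgl_mono h)⟩⟩ with hf
  have hfix : G ⊔ (OrderHom.lfp f ⊔
      SimpleGraph.fromRel (WeaklyGloballyLinked d (OrderHom.lfp f))) = OrderHom.lfp f :=
    OrderHom.map_lfp f
  have hG : G ≤ OrderHom.lfp f := by
    conv_rhs => rw [← hfix]
    exact le_sup_left
  have hW : SimpleGraph.fromRel (WeaklyGloballyLinked d (OrderHom.lfp f)) ≤
      OrderHom.lfp f := by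
    conv_rhs => rw [← hfix]
    exact le_sup_of_le_right le_sup_right
  have hTLlfp : TotallyLoose d (OrderHom.lfp f) := by
    intro u v hne hnadj hwgl
    exact hnadj (hW ⟨hne, Or.inl hwgl⟩)
  refine ⟨OrderHom.lfp f, ⟨hG, hTLlfp, ?_⟩, ?_⟩
  · intro K hGK hTL
    apply OrderHom.lfp_le
    refine sup_le hGK (sup_le le_rfl ?_)
    intro u v huv
    rcases huv with ⟨hne, hor⟩
    by_contra hK
    rcases hor with h1 | h1
    · exact hTL u v hne hK h1
    · exact hTL v u hne.symm (fun h => hK h.symm) h1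
  · rintro H' ⟨hG', hTL', hmin'⟩
    have hle : OrderHom.lfp f ≤ H' := by
      apply OrderHom.lfp_le
      refine sup_le hG' (sup_le le_rfl ?_)
      intro u v huv
      rcases huv with ⟨hne, hor⟩
      by_contra hK
      rcases hor with h1 | h1
      · exact hTL' u v hne hK h1
      · exact hTL' v u hne.symm (fun h => hK h.symm) h1
    exact le_antisymm (hmin' _ hG hTLlfp) hle

end RigidAug
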